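/- Let E be a real Hilbert space and F : E → ℝ differentiable with L-Lipschitz gradient (L > 0), μ-strongly convex with constant μ > 0 (i.e., F(y) ≥ F(x) + ⟨∇F(x), y − x⟩ + (μ/2)‖y − x‖² for all x, y), with minimizer θ* and minimum value F* = F(θ*). Fix 0 < η ≤ min(1/L, 1/(2μ)). Let θ^0, θ^1, … : Ω → E and g^0, g^1, … : Ω → E be random vectors with θ^{t+1} = θ^t − η • g^t for all t, conditional expectation of g^t given σ(θ^0,…,θ^t) equal to ∇F(θ^t) almost surely, conditional variance at most σ² almost surely (all stated integrability holding), and θ^0 deterministic. Then for every t, E[‖θ^t − θ*‖²] ≤ (L/μ)·(1 − μη)^t·‖θ^0 − θ*‖² + L·η·σ²/μ². -/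

import Mathlib

/-!
For `0 ≤ η ≤ 1/L` a deterministic gradient step contracts the squared distance to the minimiser,
`‖x - η ∇F x - θ*‖² ≤ (1 - μη) ‖x - θ*‖²`: strong convexity bounds `⟪∇F x, x - θ*⟫` from below and
the descent lemma bounds `‖∇F x‖²` by `2L (F x - F*)`. The stochastic step differs from the
deterministic one by `η` times a noise whose conditional mean vanishes, so by the pull-out property
the cross term integrates to zero and the noise adds at most `η²σ²`. Unrolling
`a (t+1) ≤ (1 - μη) a t + η²σ²` gives `a t ≤ (1 - μη)^t a 0 + ησ²/μ`, and `μ ≤ L` gives the bound.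
-/

open MeasureTheory RealInnerProductSpace

section Smooth

variable {E : Type*} [NormedAddCommGroup E] [InnerProductSpace ℝ E] [CompleteSpace E]
  {F : E → ℝ} {L μ : ℝ}

theorem hasDerivAt_comp_add_smul (hF : Differentiable ℝ F) (x v : E) (s : ℝ) :
    HasDerivAt (fun s : ℝ => F (x + s • v)) ⟪gradient F (x + s • v), v⟫ s := by
  have hline : HasDerivAt (fun s : ℝ => x + s • v) v s := by
    simpa using ((hasDerivAt_id s).smul_const v).const_add x
  exact ((hF _).hasGradientAt.hasFDerivAt.comp_hasDerivAt s hline).congr_deriv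
    InnerProductSpace.toDual_apply_apply

theorem descent_lemma (hF : Differentiable ℝ F)
    (hlip : ∀ x y, ‖gradient F x - gradient F y‖ ≤ L * ‖x - y‖) (x y : E) :
    F y ≤ F x + ⟪gradient F x, y - x⟫ + L / 2 * ‖y - x‖ ^ 2 := by
  set v := y - x
  let φ : ℝ → ℝ := fun s => F (x + s • v) - s * ⟪gradient F x, v⟫ - L * ‖v‖ ^ 2 * s ^ 2 / 2
  have hφ : ∀ s, HasDerivAt φ
      (⟪gradient F (x + s • v), v⟫ - ⟪gradient F x, v⟫ - L * ‖v‖ ^ 2 * s) s := by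
    intro s
    have hquad := ((hasDerivAt_pow 2 s).const_mul (L * ‖v‖ ^ 2)).div_const 2
    refine (((hasDerivAt_comp_add_smul hF x v s).sub
      ((hasDerivAt_id s).mul_const _)).sub hquad).congr_deriv ?_
    push_cast
    ring
  have hanti : AntitoneOn φ (Set.Icc 0 1) := by
    refine antitoneOn_of_deriv_nonpos (convex_Icc 0 1)
      (fun s _ => (hφ s).continuousAt.continuousWithinAt)
      (fun s _ => (hφ s).differentiableAt.differentiableWithinAt) fun s hs => ?_
    rw [interior_Icc] at hs
    rw [(hφ s).deriv, ← inner_sub_left]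
    calc ⟪gradient F (x + s • v) - gradient F x, v⟫ - L * ‖v‖ ^ 2 * s
        ≤ ‖gradient F (x + s • v) - gradient F x‖ * ‖v‖ - L * ‖v‖ ^ 2 * s := by
          gcongr; exact real_inner_le_norm _ _
      _ ≤ L * ‖x + s • v - x‖ * ‖v‖ - L * ‖v‖ ^ 2 * s := by
          gcongr; exact hlip _ _
      _ = 0 := by
          rw [add_sub_cancel_left, norm_smul, Real.norm_of_nonneg hs.1.le]; ring
  have h01 := hanti (Set.left_mem_Icc.2 zero_le_one) (Set.right_mem_Icc.2 zero_le_one) zero_le_one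
  simp only [φ, v, one_smul, zero_smul, add_zero, zero_mul, one_pow, one_mul, mul_one,
    zero_pow two_ne_zero, mul_zero, zero_div, sub_zero, add_sub_cancel] at h01
  linarith

theorem sq_norm_gradient_le (hF : Differentiable ℝ F) (hL : 0 < L)
    (hlip : ∀ x y, ‖gradient F x - gradient F y‖ ≤ L * ‖x - y‖) {Fmin : ℝ}
    (hmin : ∀ x, Fmin ≤ F x) (x : E) :
    ‖gradient F x‖ ^ 2 ≤ 2 * L * (F x - Fmin) := by
  have hstep := descent_lemma hF hlip x (x - L⁻¹ • gradient F x)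
  rw [sub_sub_cancel_left, inner_neg_right, real_inner_smul_right, real_inner_self_eq_norm_sq,
    norm_neg, norm_smul, Real.norm_of_nonneg (inv_nonneg.2 hL.le)] at hstep
  have hdec : F (x - L⁻¹ • gradient F x) ≤ F x - ‖gradient F x‖ ^ 2 / (2 * L) := by
    refine hstep.trans_eq ?_
    field_simp
    ring
  have := hmin (x - L⁻¹ • gradient F x)
  rw [← div_le_iff₀' (by positivity)]
  linarith

theorem norm_gradient_step_sub_sq_le (hF : Differentiable ℝ F) (hL : 0 < L)
    (hlip : ∀ x y, ‖gradient F x - gradient F y‖ ≤ L * ‖x - y‖)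
    (hsc : ∀ x y, F x + ⟪gradient F x, y - x⟫ + (μ / 2) * ‖y - x‖ ^ 2 ≤ F y)
    {xmin : E} (hmin : ∀ x, F xmin ≤ F x) {η : ℝ} (hη0 : 0 ≤ η) (hηL : η ≤ 1 / L) (x : E) :
    ‖x - η • gradient F x - xmin‖ ^ 2 ≤ (1 - μ * η) * ‖x - xmin‖ ^ 2 := by
  have hgrad := sq_norm_gradient_le hF hL hlip hmin x
  have hconv := hsc x xmin
  rw [← neg_sub x xmin, inner_neg_right, norm_neg] at hconv
  have hexpand : ‖x - η • gradient F x - xmin‖ ^ 2 =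
      ‖x - xmin‖ ^ 2 - 2 * η * ⟪gradient F x, x - xmin⟫ + η ^ 2 * ‖gradient F x‖ ^ 2 := by
    rw [sub_right_comm, norm_sub_sq_real, real_inner_smul_right, norm_smul, real_inner_comm,
      Real.norm_of_nonneg hη0]
    ring
  have hηL' : η * L ≤ 1 := by rwa [le_div_iff₀ hL] at hηL
  have hgap : 0 ≤ F x - F xmin := sub_nonneg.2 (hmin x)
  rw [hexpand]
  nlinarith [mul_le_mul_of_nonneg_left hgrad (sq_nonneg η), mul_nonneg hη0 hgap,
    mul_le_mul_of_nonneg_right hηL' (mul_nonneg hη0 hgap)]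

theorem le_of_strongConvex_of_lipschitz_gradient [Nontrivial E]
    (hlip : ∀ x y, ‖gradient F x - gradient F y‖ ≤ L * ‖x - y‖)
    (hsc : ∀ x y, F x + ⟪gradient F x, y - x⟫ + (μ / 2) * ‖y - x‖ ^ 2 ≤ F y) :
    μ ≤ L := by
  obtain ⟨v, hv⟩ := exists_ne (0 : E)
  have h₁ := hsc 0 v
  have h₂ := hsc v 0
  simp only [sub_zero, zero_sub, inner_neg_right, norm_neg] at h₁ h₂
  have hmono : μ * ‖v‖ ^ 2 ≤ ⟪gradient F v - gradient F 0, v⟫ := by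
    rw [inner_sub_left]; linarith
  have hcs : ⟪gradient F v - gradient F 0, v⟫ ≤ L * ‖v‖ ^ 2 := by
    calc ⟪gradient F v - gradient F 0, v⟫ ≤ ‖gradient F v - gradient F 0‖ * ‖v‖ :=
          real_inner_le_norm _ _
      _ ≤ L * ‖v - 0‖ * ‖v‖ := by gcongr; exact hlip _ _
      _ = L * ‖v‖ ^ 2 := by rw [sub_zero]; ring
  exact le_of_mul_le_mul_right (hmono.trans hcs) (by positivity)

theorem eq_of_gradient_eq_zero
    (hsc : ∀ x y, F x + ⟪gradient F x, y - x⟫ + (μ / 2) * ‖y - x‖ ^ 2 ≤ F y) (hμ : 0 < μ)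
    {xmin : E} (hmin : ∀ x, F xmin ≤ F x) {x : E} (hx : gradient F x = 0) : x = xmin := by
  have h := hsc x xmin
  rw [hx, inner_zero_left, add_zero, norm_sub_rev] at h
  have : ‖x - xmin‖ ^ 2 ≤ 0 := by nlinarith [hmin x]
  simpa [sub_eq_zero] using this

end Smooth

theorem le_pow_mul_add_div_of_le_mul_add {a : ℕ → ℝ} {q c : ℝ} (hq : 0 ≤ q) (hq1 : q < 1)
    (hc : 0 ≤ c) (h : ∀ t, a (t + 1) ≤ q * a t + c) (t : ℕ) :
    a t ≤ q ^ t * a 0 + c / (1 - q) := by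
  have h1q : 0 < 1 - q := sub_pos.2 hq1
  induction t with
  | zero => simpa using div_nonneg hc h1q.le
  | succ t ih =>
    calc a (t + 1) ≤ q * (q ^ t * a 0 + c / (1 - q)) + c := (h t).trans (by gcongr)
      _ = q ^ (t + 1) * a 0 + c / (1 - q) := by field_simp; ring

theorem measurable_iSup_comap_range {Ω β : Type*} [mβ : MeasurableSpace β] (f : ℕ → Ω → β)
    (t : ℕ) : Measurable[⨆ s ∈ Finset.range (t + 1), MeasurableSpace.comap (f s) mβ] (f t) :=
  measurable_iff_comap_le.2 (le_iSup₂_of_le t (Finset.self_mem_range_succ t) le_rfl)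

theorem monotone_iSup_comap_range {Ω β : Type*} [mβ : MeasurableSpace β] (f : ℕ → Ω → β) :
    Monotone fun t => ⨆ s ∈ Finset.range (t + 1), MeasurableSpace.comap (f s) mβ :=
  fun _ _ hst => biSup_mono fun _ hs => Finset.range_subset_range.2 (by omega) hs

section Conditional

variable {Ω : Type*} {m m0 : MeasurableSpace Ω} {ν : Measure Ω}
  {E : Type*} [NormedAddCommGroup E] [InnerProductSpace ℝ E] [CompleteSpace E]

theorem Measurable.aestronglyMeasurable_of_le {β : Type*} [TopologicalSpace β]
    [TopologicalSpace.PseudoMetrizableSpace β] [MeasurableSpace β] [BorelSpace β] {f : Ω → β}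
    (hm : m ≤ m0) (hfm : Measurable[m] f) (hf : AEStronglyMeasurable f ν) :
    AEStronglyMeasurable[m] f ν := by
  obtain ⟨t, ht, hft⟩ := hf.isSeparable_ae_range
  refine AEStronglyMeasurable.of_trim hm (aestronglyMeasurable_iff_aemeasurable_separable.2
    ⟨hfm.aemeasurable, closure t, ht.closure, ?_⟩)
  change ν.trim hm (f ⁻¹' closure t)ᶜ = 0
  rw [trim_measurableSet_eq hm (hfm isClosed_closure.measurableSet).compl]
  exact measure_mono_null (fun _ hω hmem => hω (subset_closure hmem)) hft

theorem integral_inner_eq_zero_of_condExp_eq_zero (hm : m ≤ m0) [SigmaFinite (ν.trim hm)]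
    {X e : Ω → E} (hX : AEStronglyMeasurable[m] X ν)
    (hXe : Integrable (fun ω => ⟪X ω, e ω⟫) ν) (he : Integrable e ν) (hce : ν[e | m] =ᵐ[ν] 0) :
    ∫ ω, ⟪X ω, e ω⟫ ∂ν = 0 := by
  rw [← integral_condExp hm]
  refine (integral_congr_ae ?_).trans (integral_zero _ _)
  filter_upwards [condExp_bilin_of_aestronglyMeasurable_left (innerSL ℝ) hX hXe he, hce]
    with ω hpull he0
  exact hpull.trans (by simp [he0])

theorem integral_norm_sub_smul_sq_of_condExp_eq_zero (hm : m ≤ m0) [IsFiniteMeasure ν]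
    {X e : Ω → E} (hX : AEStronglyMeasurable[m] X ν)
    (hX2 : Integrable (fun ω => ‖X ω‖ ^ 2) ν) (he : MemLp e 2 ν) (hce : ν[e | m] =ᵐ[ν] 0)
    (c : ℝ) :
    ∫ ω, ‖X ω - c • e ω‖ ^ 2 ∂ν = ∫ ω, ‖X ω‖ ^ 2 ∂ν + c ^ 2 * ∫ ω, ‖e ω‖ ^ 2 ∂ν := by
  have : SigmaFinite (ν.trim hm) := sigmaFiniteTrim_mono hm le_rfl
  have hXL2 : MemLp X 2 ν := (memLp_two_iff_integrable_sq_norm (hX.mono hm)).2 hX2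
  have hXe : Integrable (fun ω => ⟪X ω, e ω⟫) ν :=
    memLp_one_iff_integrable.1 ((innerSL ℝ).memLp_of_bilin 1 hXL2 he)
  have he2 : Integrable (fun ω => ‖e ω‖ ^ 2) ν :=
    (memLp_two_iff_integrable_sq_norm he.1).1 he
  have hexpand : ∀ ω, ‖X ω - c • e ω‖ ^ 2 = ‖X ω‖ ^ 2 - 2 * c * ⟪X ω, e ω⟫ + c ^ 2 * ‖e ω‖ ^ 2 := by
    intro ω
    rw [norm_sub_sq_real, real_inner_smul_right, norm_smul, mul_pow, Real.norm_eq_abs, sq_abs]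
    ring
  simp_rw [hexpand]
  have hdiff : Integrable (fun ω => ‖X ω‖ ^ 2 - 2 * c * ⟪X ω, e ω⟫) ν := hX2.sub (hXe.const_mul _)
  rw [integral_add hdiff (he2.const_mul _),
    integral_sub hX2 (hXe.const_mul _),
    integral_const_mul, integral_const_mul,
    integral_inner_eq_zero_of_condExp_eq_zero hm hX hXe (he.integrable one_le_two) hce]
  ring

end Conditional

section SGD

variable {E : Type*} [NormedAddCommGroup E] [InnerProductSpace ℝ E] [CompleteSpace E]
  {F : E → ℝ} {L μ η σ : ℝ} {xmin : E} {Ω : Type*} {m m0 : MeasurableSpace Ω} {ν : Measure Ω}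

theorem integral_norm_sgd_step_sub_sq_le [IsProbabilityMeasure ν] (hF : Differentiable ℝ F)
    (hL : 0 < L) (hlip : ∀ x y, ‖gradient F x - gradient F y‖ ≤ L * ‖x - y‖)
    (hsc : ∀ x y, F x + ⟪gradient F x, y - x⟫ + (μ / 2) * ‖y - x‖ ^ 2 ≤ F y)
    (hmin : ∀ x, F xmin ≤ F x) (hη0 : 0 ≤ η) (hηL : η ≤ 1 / L) (hm : m ≤ m0) {θ g : Ω → E}
    (hθ : AEStronglyMeasurable[m] θ ν) (hg : Integrable g ν)
    (hdist : Integrable (fun ω => ‖θ ω - xmin‖ ^ 2) ν)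
    (hnoise : Integrable (fun ω => ‖g ω - gradient F (θ ω)‖ ^ 2) ν)
    (hmean : ν[g | m] =ᵐ[ν] fun ω => gradient F (θ ω))
    (hvar : ∀ᵐ ω ∂ν, ν[fun ω => ‖g ω - gradient F (θ ω)‖ ^ 2 | m] ω ≤ σ ^ 2) :
    ∫ ω, ‖θ ω - η • g ω - xmin‖ ^ 2 ∂ν
      ≤ (1 - μ * η) * ∫ ω, ‖θ ω - xmin‖ ^ 2 ∂ν + η ^ 2 * σ ^ 2 := by
  have : SigmaFinite (ν.trim hm) := sigmaFiniteTrim_mono hm le_rfl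
  set G : Ω → E := fun ω => gradient F (θ ω)
  set e : Ω → E := fun ω => g ω - G ω
  set X : Ω → E := fun ω => θ ω - η • G ω - xmin
  have hGm : AEStronglyMeasurable[m] G ν :=
    (LipschitzWith.of_dist_le' fun x y => by simpa only [dist_eq_norm] using hlip x y).continuous
      |>.comp_aestronglyMeasurable hθ
  have hXm : AEStronglyMeasurable[m] X ν :=
    (hθ.sub (hGm.const_smul η)).sub aestronglyMeasurable_const
  have hcontract : ∀ ω, ‖X ω‖ ^ 2 ≤ (1 - μ * η) * ‖θ ω - xmin‖ ^ 2 := fun ω =>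
    norm_gradient_step_sub_sq_le hF hL hlip hsc hmin hη0 hηL (θ ω)
  have hX2 : Integrable (fun ω => ‖X ω‖ ^ 2) ν :=
    (hdist.const_mul _).mono' ((hXm.mono hm).norm.pow 2) <| ae_of_all _ fun ω => by
      rw [Real.norm_of_nonneg (by positivity)]; exact hcontract ω
  have he : MemLp e 2 ν :=
    (memLp_two_iff_integrable_sq_norm (hg.1.sub (hGm.mono hm))).2 hnoise
  have hce : ν[e | m] =ᵐ[ν] 0 := by
    have hG : Integrable G ν :=
      (hg.sub (he.integrable one_le_two)).congr (ae_of_all _ fun ω => sub_sub_cancel _ _)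
    filter_upwards [condExp_sub hg hG m, hmean, condExp_of_aestronglyMeasurable' hm hGm hG]
      with ω hsub hg' hG'
    change ν[g - G | m] ω = 0
    rw [hsub, Pi.sub_apply, hg', hG', sub_self]
  have hvar' : ∫ ω, ‖e ω‖ ^ 2 ∂ν ≤ σ ^ 2 := by
    rw [← integral_condExp hm]
    exact (integral_mono_ae integrable_condExp (integrable_const _) hvar).trans_eq (by simp)
  have hsplit : ∀ ω, θ ω - η • g ω - xmin = X ω - η • e ω := fun ω => by
    simp only [X, e, smul_sub]; abel
  simp_rw [hsplit, integral_norm_sub_smul_sq_of_condExp_eq_zero hm hXm hX2 he hce]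
  exact add_le_add ((integral_mono hX2 (hdist.const_mul _) hcontract).trans_eq
    (integral_const_mul _ _)) (mul_le_mul_of_nonneg_left hvar' (sq_nonneg η))

/- The iterates need not be measurable, so `m` need not be a sub-σ-algebra; `ν[g | m]` is then the
junk value `0`, and unbiasedness forces `∇F ∘ θ = 0` almost everywhere. -/
theorem integral_norm_sub_sq_eq_zero_of_not_le
    (hsc : ∀ x y, F x + ⟪gradient F x, y - x⟫ + (μ / 2) * ‖y - x‖ ^ 2 ≤ F y) (hμ : 0 < μ)
    (hmin : ∀ x, F xmin ≤ F x) (hm : ¬m ≤ m0) {θ g : Ω → E}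
    (hmean : ν[g | m] =ᵐ[ν] fun ω => gradient F (θ ω)) :
    ∫ ω, ‖θ ω - xmin‖ ^ 2 ∂ν = 0 := by
  rw [condExp_of_not_le hm] at hmean
  refine (integral_congr_ae ?_).trans (integral_zero _ _)
  filter_upwards [hmean] with ω hω
  simp [eq_of_gradient_eq_zero hsc hμ hmin hω.symm]

theorem integral_norm_sgd_iterate_sub_sq_succ_le [IsProbabilityMeasure ν] [MeasurableSpace E]
    [BorelSpace E] (hF : Differentiable ℝ F) (hL : 0 < L)
    (hlip : ∀ x y, ‖gradient F x - gradient F y‖ ≤ L * ‖x - y‖) (hμ : 0 < μ)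
    (hsc : ∀ x y, F x + ⟪gradient F x, y - x⟫ + (μ / 2) * ‖y - x‖ ^ 2 ≤ F y)
    (hmin : ∀ x, F xmin ≤ F x) (hη0 : 0 ≤ η) (hηL : η ≤ 1 / L) (hμη : μ * η ≤ 1)
    {θ g : ℕ → Ω → E} {m : ℕ → MeasurableSpace Ω} (hmono : Monotone m)
    (hθm : ∀ t, Measurable[m t] (θ t)) (hθ0 : AEStronglyMeasurable (θ 0) ν)
    (hupd : ∀ t ω, θ (t + 1) ω = θ t ω - η • g t ω) (hg : ∀ t, Integrable (g t) ν)
    (hnoise : ∀ t, Integrable (fun ω => ‖g t ω - gradient F (θ t ω)‖ ^ 2) ν)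
    (hdist : ∀ t, Integrable (fun ω => ‖θ t ω - xmin‖ ^ 2) ν)
    (hmean : ∀ t, ν[g t | m t] =ᵐ[ν] fun ω => gradient F (θ t ω))
    (hvar : ∀ t, ∀ᵐ ω ∂ν, ν[fun ω => ‖g t ω - gradient F (θ t ω)‖ ^ 2 | m t] ω ≤ σ ^ 2)
    (t : ℕ) :
    ∫ ω, ‖θ (t + 1) ω - xmin‖ ^ 2 ∂ν
      ≤ (1 - μ * η) * ∫ ω, ‖θ t ω - xmin‖ ^ 2 ∂ν + η ^ 2 * σ ^ 2 := by
  by_cases hle : m (t + 1) ≤ m0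
  · have hmt : m t ≤ m0 := (hmono t.le_succ).trans hle
    have hθ : ∀ t, AEStronglyMeasurable (θ t) ν := by
      intro t
      induction t with
      | zero => exact hθ0
      | succ t ih => rw [funext (hupd t)]; exact ih.sub ((hg t).1.const_smul η)
    simp_rw [hupd t]
    exact integral_norm_sgd_step_sub_sq_le hF hL hlip hsc hmin hη0 hηL hmt
      ((hθm t).aestronglyMeasurable_of_le hmt (hθ t)) (hg t) (hdist t) (hnoise t) (hmean t)
      (hvar t)
  · rw [integral_norm_sub_sq_eq_zero_of_not_le hsc hμ hmin hle (hmean (t + 1))]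
    have : 0 ≤ ∫ ω, ‖θ t ω - xmin‖ ^ 2 ∂ν := integral_nonneg fun ω => sq_nonneg _
    have : 0 ≤ 1 - μ * η := sub_nonneg.2 hμη
    positivity

end SGD

theorem strongly_convex_iterate_bound_general
    {E : Type*} [NormedAddCommGroup E] [InnerProductSpace ℝ E] [CompleteSpace E]
    [MeasurableSpace E] [BorelSpace E]
    {Ωs : Type*} [MeasureSpace Ωs]
    (hprob : IsProbabilityMeasure (volume : Measure Ωs))
    (F : E → ℝ) (hF : Differentiable ℝ F)
    (L : ℝ) (hL : 0 < L)
    (hlip : ∀ x y : E, ‖gradient F x - gradient F y‖ ≤ L * ‖x - y‖)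
    (μ : ℝ) (hμ : 0 < μ)
    (hsc : ∀ x y : E,
      F x + ⟪gradient F x, y - x⟫ + (μ / 2) * ‖y - x‖ ^ 2 ≤ F y)
    (θstar : E) (hmin : ∀ x, F θstar ≤ F x)
    (η : ℝ) (hη0 : 0 < η) (hηmin : η ≤ min (1 / L) (1 / (2 * μ)))
    (θ g : ℕ → Ωs → E) (σ : ℝ)
    (θ0 : E) (hθ0 : ∀ ω, θ 0 ω = θ0)
    (m : ℕ → MeasurableSpace Ωs)
    (hm : ∀ t, m t = ⨆ s ∈ Finset.range (t + 1), MeasurableSpace.comap (θ s) inferInstance)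
    (hupd : ∀ t, ∀ ω, θ (t + 1) ω = θ t ω - η • g t ω)
    (hg_int : ∀ t, Integrable (g t))
    (hgsq_int : ∀ t, Integrable (fun ω => ‖g t ω - gradient F (θ t ω)‖ ^ 2))
    (hdistsq_int : ∀ t, Integrable (fun ω => ‖θ t ω - θstar‖ ^ 2))
    (hcond_mean : ∀ t,
      (volume[g t | m t]) =ᵐ[volume] fun ω => gradient F (θ t ω))
    (hcond_var : ∀ t,
      ∀ᵐ ω ∂(volume : Measure Ωs),
        (volume[fun ω' => ‖g t ω' - gradient F (θ t ω')‖ ^ 2 | m t]) ω ≤ σ ^ 2) :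
    ∀ t, ∫ ω, ‖θ t ω - θstar‖ ^ 2
      ≤ (L / μ) * (1 - μ * η) ^ t * ‖θ0 - θstar‖ ^ 2 + L * η * σ ^ 2 / μ ^ 2 := by
  intro t
  rcases subsingleton_or_nontrivial E with hE | hE
  · simp [Subsingleton.elim _ (0 : E)]
    positivity
  have hηL : η ≤ 1 / L := hηmin.trans (min_le_left _ _)
  have hq : 0 ≤ 1 - μ * η := by
    have := hηmin.trans (min_le_right _ _)
    rw [le_div_iff₀ (by positivity)] at this
    linarith
  have hrec := integral_norm_sgd_iterate_sub_sq_succ_le hF hL hlip hμ hsc hmin hη0.le hηL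
    (by linarith) (fun s t hst => by simpa only [hm] using monotone_iSup_comap_range θ hst)
    (fun t => by rw [hm t]; exact measurable_iSup_comap_range θ t)
    (by rw [funext hθ0]; exact aestronglyMeasurable_const) hupd hg_int hgsq_int hdistsq_int
    hcond_mean hcond_var
  have hLμ : 1 ≤ L / μ := (one_le_div hμ).2 (le_of_strongConvex_of_lipschitz_gradient hlip hsc)
  calc ∫ ω, ‖θ t ω - θstar‖ ^ 2
      ≤ (1 - μ * η) ^ t * (∫ ω, ‖θ 0 ω - θstar‖ ^ 2) + η ^ 2 * σ ^ 2 / (1 - (1 - μ * η)) :=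
        le_pow_mul_add_div_of_le_mul_add (a := fun t => ∫ ω, ‖θ t ω - θstar‖ ^ 2)
          hq (by linarith [mul_pos hμ hη0]) (by positivity) hrec t
    _ = (1 - μ * η) ^ t * ‖θ0 - θstar‖ ^ 2 + η * σ ^ 2 / μ := by
        simp only [hθ0, integral_const, probReal_univ, one_smul]
        field_simp
        ring
    _ ≤ L / μ * ((1 - μ * η) ^ t * ‖θ0 - θstar‖ ^ 2 + η * σ ^ 2 / μ) :=
        le_mul_of_one_le_left (by positivity) hLμ
    _ = L / μ * (1 - μ * η) ^ t * ‖θ0 - θstar‖ ^ 2 + L * η * σ ^ 2 / μ ^ 2 := by ring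

/-- Strongly convex iterate convergence for pMixFed viewed as SGD with effective
step size `0 < η ≤ min(1/L, 1/(2μ))`: for a `μ`-strongly convex `F` with
`L`-Lipschitz gradient, minimizer `θ*`, conditionally unbiased stochastic
gradients with conditional variance at most `σ²`, and deterministic `θ^0`,
`E[‖θ^t - θ*‖²] ≤ (L/μ)(1 - μη)^t ‖θ^0 - θ*‖² + L η σ² / μ²` for all `t`. -/
theorem strongly_convex_iterate_bound
    {E : Type*} [NormedAddCommGroup E] [InnerProductSpace ℝ E] [CompleteSpace E]
    [MeasurableSpace E] [BorelSpace E]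
    {Ωs : Type*} [MeasureSpace Ωs]
    (hprob : IsProbabilityMeasure (volume : Measure Ωs))
    (F : E → ℝ) (hF : Differentiable ℝ F)
    (L : ℝ) (hL : 0 < L)
    (hlip : ∀ x y : E, ‖gradient F x - gradient F y‖ ≤ L * ‖x - y‖)
    (μ : ℝ) (hμ : 0 < μ)
    (hsc : ∀ x y : E,
      F x + ⟪gradient F x, y - x⟫ + (μ / 2) * ‖y - x‖ ^ 2 ≤ F y)
    (θstar : E) (hmin : ∀ x, F θstar ≤ F x)
    (η : ℝ) (hη0 : 0 < η) (hηmin : η ≤ min (1 / L) (1 / (2 * μ)))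
    (θ g : ℕ → Ωs → E) (σ : ℝ)
    (θ0 : E) (hθ0 : ∀ ω, θ 0 ω = θ0)
    (m : ℕ → MeasurableSpace Ωs)
    (hm : ∀ t, m t = ⨆ s ∈ Finset.range (t + 1), MeasurableSpace.comap (θ s) inferInstance)
    (hupd : ∀ t, ∀ ω, θ (t + 1) ω = θ t ω - η • g t ω)
    (hg_int : ∀ t, Integrable (g t))
    (hgsq_int : ∀ t, Integrable (fun ω => ‖g t ω - gradient F (θ t ω)‖ ^ 2))
    (hF_int : ∀ t, Integrable (fun ω => F (θ t ω)))
    (hdistsq_int : ∀ t, Integrable (fun ω => ‖θ t ω - θstar‖ ^ 2))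
    (hcond_mean : ∀ t,
      (volume[g t | m t]) =ᵐ[volume] fun ω => gradient F (θ t ω))
    (hcond_var : ∀ t,
      ∀ᵐ ω ∂(volume : Measure Ωs),
        (volume[fun ω' => ‖g t ω' - gradient F (θ t ω')‖ ^ 2 | m t]) ω ≤ σ ^ 2) :
    ∀ t, ∫ ω, ‖θ t ω - θstar‖ ^ 2
      ≤ (L / μ) * (1 - μ * η) ^ t * ‖θ0 - θstar‖ ^ 2 + L * η * σ ^ 2 / μ ^ 2 :=
  strongly_convex_iterate_bound_general hprob F hF L hL hlip μ hμ hsc θstar hmin η hη0 hηmin θ g σ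
    θ0 hθ0 m hm hupd hg_int hgsq_int hdistsq_int hcond_mean hcond_var
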